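/- Let (W,R,V) be a model rooted at r, X a finite set of propositional variables, k a natural number, and m ≥ 1. Define C(x,y) for x,y ∈ W_{≤k} := {w : d_r(w) ≤ k} by: d_r(x) = k, or (d_r(x) < k and d_r(y) ≤ d_r(x)+1 and ∃y' with x R y' and y' ∼_{k−d_r(x)−1}^X y). Suppose x, y_1, …, y_{m−1}, y_m ∈ W_{≤k} satisfy C(x,y_1), C(y_1,y_2), …, C(y_{m−1},y_m), and suppose d_r(x) ≤ k − m. Then there exist y_1',…,y_m' ∈ W with x R y_1' R y_2' R ⋯ R y_m', d_r(y_i') ≤ d_r(x) + i, and y_i' ∼_{k−d_r(x)−i}^X y_i for each i ∈ {1,…,m}. -/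
import Mathlib


/-- Modal formulas: ⊥, propositional variables, ¬, ∨, ◇. -/
inductive ModalFormula : Type
  | bot : ModalFormula
  | var : ℕ → ModalFormula
  | neg : ModalFormula → ModalFormula
  | or : ModalFormula → ModalFormula → ModalFormula
  | dia : ModalFormula → ModalFormula

namespace ModalFormula

/-- Modal depth: maximal nesting of ◇. -/
def md : ModalFormula → ℕ
  | bot => 0
  | var _ => 0
  | neg φ => md φ
  | or φ ψ => max (md φ) (md ψ)
  | dia φ => md φ + 1

/-- The set of propositional variables occurring in a formula. -/
def vars : ModalFormula → Set ℕ
  | bot => ∅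
  | var p => {p}
  | neg φ => vars φ
  | or φ ψ => vars φ ∪ vars ψ
  | dia φ => vars φ

/-- The set of subformulas of a formula (including the formula itself). -/
def subformulas : ModalFormula → Set ModalFormula
  | bot => {bot}
  | var p => {var p}
  | neg φ => insert (neg φ) (subformulas φ)
  | or φ ψ => insert (or φ ψ) (subformulas φ ∪ subformulas ψ)
  | dia φ => insert (dia φ) (subformulas φ)

end ModalFormula

/-- Standard Kripke satisfaction for a model given by a relation `R` and a valuation `V`. -/
def Sat {W : Type*} (R : W → W → Prop) (V : ℕ → Set W) : W → ModalFormula → Prop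
  | _, .bot => False
  | w, .var p => w ∈ V p
  | w, .neg φ => ¬ Sat R V w φ
  | w, .or φ ψ => Sat R V w φ ∨ Sat R V w ψ
  | w, .dia φ => ∃ v, R w v ∧ Sat R V v φ

/-- The `k`-step relation: `relPow R 0` is the identity, `relPow R (k+1) = relPow R k ∘ R`. -/
def relPow {W : Type*} (R : W → W → Prop) : ℕ → W → W → Prop
  | 0, x, y => x = y
  | k + 1, x, y => ∃ u, relPow R k x u ∧ R u y

/-- A frame is a `Φ`-frame if for every `(m,n) ∈ Φ`, `x R^m y` implies `x R^n y`. -/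
def PhiFrame {W : Type*} (R : W → W → Prop) (Φ : Set (ℕ × ℕ)) : Prop :=
  ∀ mn ∈ Φ, ∀ x y : W, relPow R mn.1 x y → relPow R mn.2 x y

/-- A pointed frame is rooted at `r` if every world is reachable from `r` in some number of steps. -/
def Rooted {W : Type*} (R : W → W → Prop) (r : W) : Prop :=
  ∀ w : W, ∃ k, relPow R k r w

/-- The depth of `w` w.r.t. `r`: the least `k` with `r R^k w`. -/
noncomputable def depth {W : Type*} (R : W → W → Prop) (r w : W) : ℕ :=
  sInf {k | relPow R k r w}

/-- `f` is a pointed p-morphism from `(W',R',r')` to `(W,R,r)`. -/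
def IsPMorphism {W' W : Type*} (R' : W' → W' → Prop) (r' : W')
    (R : W → W → Prop) (r : W) (f : W' → W) : Prop :=
  f r' = r ∧ (∀ x y, R' x y → R (f x) (f y)) ∧
    (∀ x y', R (f x) y' → ∃ y, R' x y ∧ f y = y')

/-- Bisimilarity of `x` (in model `(R,V)`) and `x'` (in model `(R',V')`). -/
def Bisim {W W' : Type*} (R : W → W → Prop) (V : ℕ → Set W)
    (R' : W' → W' → Prop) (V' : ℕ → Set W') (x : W) (x' : W') : Prop :=
  ∃ Z : W → W' → Prop, Z x x' ∧ ∀ w w', Z w w' →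
    (∀ p, w ∈ V p ↔ w' ∈ V' p) ∧
    (∀ v, R w v → ∃ v', R' w' v' ∧ Z v v') ∧
    (∀ v', R' w' v' → ∃ v, R w v ∧ Z v v')

/-- `k`-bisimilarity w.r.t. the set `X` of propositional variables. -/
def kBisim {W W' : Type*} (R : W → W → Prop) (V : ℕ → Set W)
    (R' : W' → W' → Prop) (V' : ℕ → Set W') (X : Set ℕ) :
    ℕ → W → W' → Prop
  | 0, w, w' => ∀ p ∈ X, (w ∈ V p ↔ w' ∈ V' p)
  | k + 1, w, w' => (∀ p ∈ X, (w ∈ V p ↔ w' ∈ V' p)) ∧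
      (∀ v, R w v → ∃ v', R' w' v' ∧ kBisim R V R' V' X k v v') ∧
      (∀ v', R' w' v' → ∃ v, R w v ∧ kBisim R V R' V' X k v v')

/-- `DepthPath R dep n x z` says there is an `n`-step `R`-path
`x R w₁ R ⋯ R w_{n-1} R z` whose intermediate points satisfy `dep (w_j) = dep x + j`. -/
def DepthPath {W : Type*} (R : W → W → Prop) (dep : W → ℕ) (n : ℕ) (x z : W) : Prop :=
  ∃ w : ℕ → W, w 0 = x ∧ w n = z ∧ (∀ j < n, R (w j) (w (j + 1))) ∧
    ∀ j, 0 < j → j < n → dep (w j) = dep x + j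

/-- The domain of the filtration: worlds of depth at most `k`. -/
def DepthLE (W : Type*) (R : W → W → Prop) (r : W) (k : ℕ) := {w : W // depth R r w ≤ k}

/-- The filtration equivalence `x ≡ y iff d(x) = d(y) and x ∼_{k-d(x)} y`. -/
def FilEquiv {W : Type*} (R : W → W → Prop) (V : ℕ → Set W) (r : W) (X : Set ℕ) (k : ℕ)
    (x y : DepthLE W R r k) : Prop :=
  depth R r x.1 = depth R r y.1 ∧ kBisim R V R V X (k - depth R r x.1) x.1 y.1

/-- The condition `C(x,y)`: `d(x) = k`, or `d(x) < k`, `d(y) ≤ d(x)+1`, and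
there is `y'` with `x R y'` and `y' ∼_{k-d(x)-1} y`. -/
def FilC {W : Type*} (R : W → W → Prop) (V : ℕ → Set W) (r : W) (X : Set ℕ) (k : ℕ)
    (x y : W) : Prop :=
  depth R r x = k ∨ (depth R r x < k ∧ depth R r y ≤ depth R r x + 1 ∧
    ∃ y', R x y' ∧ kBisim R V R V X (k - depth R r x - 1) y' y)

/-- The filtrated relation `R^f` on equivalence classes: `|x| R^f |y|` iff `C(x,y)`. -/
def FilRel {W : Type*} (R : W → W → Prop) (V : ℕ → Set W) (r : W) (X : Set ℕ) (k : ℕ)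
    (a c : Quot (FilEquiv R V r X k)) : Prop :=
  ∃ x z : DepthLE W R r k, a = Quot.mk _ x ∧ c = Quot.mk _ z ∧ FilC R V r X k x.1 z.1

/-- The filtrated valuation `V^f(p) = {|x| : x ∈ V(p)}`. -/
def FilVal {W : Type*} (R : W → W → Prop) (V : ℕ → Set W) (r : W) (X : Set ℕ) (k : ℕ)
    (p : ℕ) : Set (Quot (FilEquiv R V r X k)) :=
  {a | ∃ x : DepthLE W R r k, a = Quot.mk _ x ∧ x.1 ∈ V p}

lemma depth_succ_le {W : Type*} {R : W → W → Prop} {r : W} (hRoot : Rooted R r)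
    {a b : W} (h : R a b) : depth R r b ≤ depth R r a + 1 := by
  have hne : {k | relPow R k r a}.Nonempty := hRoot a
  have hmem : relPow R (depth R r a) r a := Nat.sInf_mem hne
  exact Nat.sInf_le ⟨a, hmem, h⟩

lemma kBisim_mono {W W' : Type*} {R : W → W → Prop} {V : ℕ → Set W}
    {R' : W' → W' → Prop} {V' : ℕ → Set W'} {X : Set ℕ} :
    ∀ {n n' : ℕ} {w : W} {w' : W'}, n ≤ n' → kBisim R V R' V' X n' w w' →
      kBisim R V R' V' X n w w' := by
  intro n
  induction n with
  | zero =>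
    intro n' w w' _ h
    cases n' with
    | zero => exact h
    | succ k => exact h.1
  | succ n ih =>
    intro n' w w' hle h
    cases n' with
    | zero => omega
    | succ k =>
      obtain ⟨h1, h2, h3⟩ := h
      refine ⟨h1, ?_, ?_⟩
      · intro v hv; obtain ⟨v', hv', hb⟩ := h2 v hv
        exact ⟨v', hv', ih (by omega) hb⟩
      · intro v' hv'; obtain ⟨v, hv, hb⟩ := h3 v' hv'
        exact ⟨v, hv, ih (by omega) hb⟩

lemma kBisim_trans {W : Type*} {R : W → W → Prop} {V : ℕ → Set W} {X : Set ℕ} :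
    ∀ {n : ℕ} {a b c : W}, kBisim R V R V X n a b → kBisim R V R V X n b c →
      kBisim R V R V X n a c := by
  intro n
  induction n with
  | zero => intro a b c h1 h2 p hp; exact (h1 p hp).trans (h2 p hp)
  | succ n ih =>
    intro a b c h1 h2
    refine ⟨fun p hp => ((h1.1 p hp).trans (h2.1 p hp)), ?_, ?_⟩
    · intro v hv
      obtain ⟨v', hv', hb⟩ := h1.2.1 v hv
      obtain ⟨v'', hv'', hb'⟩ := h2.2.1 v' hv'
      exact ⟨v'', hv'', ih hb hb'⟩
    · intro v' hv'
      obtain ⟨v'', hv'', hb⟩ := h2.2.2 v' hv'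
      obtain ⟨v, hv, hb'⟩ := h1.2.2 v'' hv''
      exact ⟨v, hv, ih hb' hb⟩

lemma kBisim_refl {W : Type*} {R : W → W → Prop} {V : ℕ → Set W} {X : Set ℕ} :
    ∀ (n : ℕ) (w : W), kBisim R V R V X n w w := by
  intro n
  induction n with
  | zero => intro w p _; rfl
  | succ n ih =>
    intro w
    exact ⟨fun p _ => Iff.rfl, fun v hv => ⟨v, hv, ih v⟩, fun v hv => ⟨v, hv, ih v⟩⟩


/-- Case 1 path lifting: a `C`-chain `x, y₁, …, y_m` in `W_{≤k}` with `d(x) + m ≤ k`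
lifts to a genuine `R`-path `x R y₁' R ⋯ R y_m'` with `d(yᵢ') ≤ d(x)+i` and
`yᵢ' ∼_{k-d(x)-i} yᵢ`. -/
theorem statement16 {W : Type*} (R : W → W → Prop) (V : ℕ → Set W) (r : W)
    (hRoot : Rooted R r) (X : Set ℕ) (hX : X.Finite) (k m : ℕ) (hm : 1 ≤ m)
    (x : W) (y : ℕ → W) (hy0 : y 0 = x)
    (hmem : ∀ i ≤ m, depth R r (y i) ≤ k)
    (hC : ∀ i < m, FilC R V r X k (y i) (y (i + 1)))
    (hdx : depth R r x + m ≤ k) :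
    ∃ y' : ℕ → W, y' 0 = x ∧ (∀ i < m, R (y' i) (y' (i + 1))) ∧
      ∀ i, 1 ≤ i → i ≤ m →
        depth R r (y' i) ≤ depth R r x + i ∧
        kBisim R V R V X (k - depth R r x - i) (y' i) (y i) := by
  -- depth bound along the y-chain
  have hdy : ∀ i ≤ m, depth R r (y i) ≤ depth R r x + i := by
    intro i
    induction i with
    | zero => intro _; rw [hy0]; omega
    | succ i ih =>
      intro hi
      have hyi := ih (by omega)
      rcases hC i (by omega) with h1 | ⟨_, h2, _⟩
      · omega
      · omega
  -- main induction: build partial lifted paths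
  have main : ∀ j ≤ m, ∃ y' : ℕ → W, y' 0 = x ∧ (∀ i < j, R (y' i) (y' (i + 1))) ∧
      ∀ i ≤ j, depth R r (y' i) ≤ depth R r x + i ∧
        kBisim R V R V X (k - depth R r x - i) (y' i) (y i) := by
    intro j
    induction j with
    | zero =>
      intro _
      refine ⟨fun _ => x, rfl, fun i hi => by omega, ?_⟩
      intro i hi
      have : i = 0 := by omega
      subst this
      rw [hy0]
      exact ⟨le_refl _, kBisim_refl _ _⟩
    | succ j ih =>
      intro hj
      obtain ⟨y', h0, hR, hP⟩ := ih (by omega)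
      have hb : kBisim R V R V X (k - depth R r x - j) (y' j) (y j) := (hP j le_rfl).2
      obtain ⟨n, hn⟩ : ∃ n, k - depth R r x - j = n + 1 :=
        ⟨k - depth R r x - j - 1, by omega⟩
      rw [hn] at hb
      -- use FilC at j
      have hdyj : depth R r (y j) ≤ depth R r x + j := hdy j (by omega)
      rcases hC j (by omega) with h1 | ⟨_, _, z, hz, hbz⟩
      · omega
      · obtain ⟨v, hv, hbv⟩ := hb.2.2 z hz
        have hbz' : kBisim R V R V X n z (y (j + 1)) :=
          kBisim_mono (by omega) hbz
        have hbfin : kBisim R V R V X (k - depth R r x - (j + 1)) v (y (j + 1)) := by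
          have : k - depth R r x - (j + 1) = n := by omega
          rw [this]
          exact kBisim_trans hbv hbz'
        refine ⟨fun i => if i ≤ j then y' i else v, by simp [h0], ?_, ?_⟩
        · intro i hi
          rcases Nat.lt_or_ge i j with h | h
          · simpa [Nat.le_of_lt h, Nat.succ_le_of_lt h] using hR i h
          · have : i = j := by omega
            subst this
            simpa [Nat.lt_irrefl] using hv
        · intro i hi
          rcases Nat.lt_or_ge i (j + 1) with h | h
          · have hij : i ≤ j := by omega
            simpa [hij] using hP i hij
          · have : i = j + 1 := by omega
            subst this
            have hne : ¬ (j + 1 ≤ j) := by omega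
            simp only [hne, if_false]
            refine ⟨?_, hbfin⟩
            have := depth_succ_le hRoot hv
            have := (hP j le_rfl).1
            omega
  obtain ⟨y', h0, hR, hP⟩ := main m le_rfl
  exact ⟨y', h0, hR, fun i _ hi => hP i hi⟩
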